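/- The sum over all a,b,c,d ∈ ℤ_{≥0} with a ≥ 1, ad − bc = 1 of 1/(16(a+c)²(b+d)²(a+b+c+d)²) converges and equals 1/48. -/

import Mathlib

/-!
The matrices `!![a, b; c, d]` with entries in `ℕ`, `a ≥ 1` and determinant `1` are exactly the
products of `L = !![1, 0; 1, 1]` and `R = !![1, 1; 0, 1]`, each in a unique way, so they form an
infinite binary tree rooted at the identity. Along it the column sums `(u, v) = (a + c, b + d)` go
from `(u, v)` to `(u + v, v)` and `(u, u + v)`. With `g = 1 / (u v)³`,
`1 / (16 u² v² (u + v)²) = (g(u, v) - g(u + v, v) - g(u, u + v)) / 48`,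
so the sum over the first `n` levels telescopes to `(1 - Σ_{level n} g) / 48`. The weights
`1 / (u v)` split in the same way, hence sum to `1` on every level, and `u v ≥ n + 1` on level `n`;
so `Σ_{level n} g ≤ 1 / (n + 1) → 0`.
-/

open Finset Filter Topology

def words : ℕ → Finset (List Bool)
  | 0 => {[]}
  | n + 1 => (words n).image (true :: ·) ∪ (words n).image (false :: ·)

theorem mem_words {n : ℕ} {w : List Bool} : w ∈ words n ↔ w.length = n := by
  induction n generalizing w with
  | zero => cases w <;> simp [words]
  | succ n ih => cases w with
    | nil => simp [words]
    | cons x w => cases x <;> simp [words, ih]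

theorem sum_words_succ {M : Type*} [AddCommMonoid M] (F : List Bool → M) (n : ℕ) :
    ∑ w ∈ words (n + 1), F w = ∑ w ∈ words n, (F (true :: w) + F (false :: w)) := by
  have hdisj : Disjoint ((words n).image (true :: ·)) ((words n).image (false :: ·)) := by
    simp [Finset.disjoint_left]
  rw [words, sum_union hdisj, sum_image (by simp), sum_image (by simp), sum_add_distrib]

theorem sum_words_eq_of_split {M : Type*} [AddCommMonoid M] {H : List Bool → M}
    (hH : ∀ w, H (true :: w) + H (false :: w) = H w) (n : ℕ) :
    ∑ w ∈ words n, H w = H [] := by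
  induction n with
  | zero => simp [words]
  | succ n ih => simpa only [sum_words_succ, hH] using ih

theorem sum_range_sum_words_eq_sub {M : Type*} [AddCommGroup M] {f G : List Bool → M}
    (h : ∀ w, f w = G w - G (true :: w) - G (false :: w)) (n : ℕ) :
    ∑ k ∈ range n, ∑ w ∈ words k, f w = G [] - ∑ w ∈ words n, G w := by
  have level (k : ℕ) :
      ∑ w ∈ words k, f w = ∑ w ∈ words k, G w - ∑ w ∈ words (k + 1), G w := by
    simp only [h, sum_words_succ, sum_sub_distrib, sum_add_distrib]
    abel
  simp only [level, sum_range_sub']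
  simp [words]

theorem hasSum_of_telescope {f G : List Bool → ℝ} (hf : 0 ≤ f)
    (h : ∀ w, f w = G w - G (true :: w) - G (false :: w))
    (hG : Tendsto (fun n ↦ ∑ w ∈ words n, G w) atTop (𝓝 0)) : HasSum f (G []) := by
  set T : ℕ → Finset (List Bool) := fun n ↦ (range n).biUnion words
  have mem_T {n : ℕ} {w : List Bool} : w ∈ T n ↔ w.length < n := by simp [T, mem_words]
  have sum_T (n : ℕ) : ∑ w ∈ T n, f w = G [] - ∑ w ∈ words n, G w := by
    rw [sum_biUnion, sum_range_sum_words_eq_sub h]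
    intro i _ j _ hij
    simp only [Function.onFun, Finset.disjoint_left, mem_words]
    omega
  have hT : Monotone T := fun m n hmn w ↦ by simp only [mem_T]; omega
  have lim : Tendsto (fun n ↦ ∑ w ∈ T n, f w) atTop (𝓝 (G [])) := by
    simpa [sum_T] using (tendsto_const_nhds (x := G [])).sub hG
  have le_lim (n : ℕ) : ∑ w ∈ T n, f w ≤ G [] :=
    Monotone.ge_of_tendsto (fun _ _ hmn ↦ sum_le_sum_of_subset_of_nonneg (hT hmn)
      fun w _ _ ↦ hf w) lim n
  have hs : Summable f := summable_of_sum_le hf fun s ↦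
    (sum_le_sum_of_subset_of_nonneg (fun w hw ↦ mem_T.2 (Nat.lt_succ_of_le (le_sup hw)))
      fun w _ _ ↦ hf w).trans (le_lim (s.sup List.length + 1))
  have hexh : Tendsto T atTop atTop :=
    tendsto_atTop_finset_of_monotone hT fun w ↦ ⟨w.length + 1, mem_T.2 w.length.lt_succ_self⟩
  rw [← tendsto_nhds_unique (hs.hasSum.comp hexh) lim]
  exact hs.hasSum

namespace SternBrocot

/-- `(a, b, c, d)` stands for the matrix `!![a, b; c, d]`. -/
abbrev Quad := ℕ × ℕ × ℕ × ℕ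

def IsUnimodular (q : Quad) : Prop := 1 ≤ q.1 ∧ q.1 * q.2.2.2 = q.2.1 * q.2.2.1 + 1

/-- Right multiplication by `!![1, 0; 1, 1]`. -/
def mulL (q : Quad) : Quad := (q.1 + q.2.1, q.2.1, q.2.2.1 + q.2.2.2, q.2.2.2)

/-- Right multiplication by `!![1, 1; 0, 1]`. -/
def mulR (q : Quad) : Quad := (q.1, q.1 + q.2.1, q.2.2.1, q.2.2.1 + q.2.2.2)

def ofWord : List Bool → Quad
  | [] => (1, 0, 0, 1)
  | true :: w => mulL (ofWord w)
  | false :: w => mulR (ofWord w)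

def u (q : Quad) : ℕ := q.1 + q.2.2.1

def v (q : Quad) : ℕ := q.2.1 + q.2.2.2

@[simp] theorem u_mulL (q : Quad) : u (mulL q) = u q + v q := by simp only [u, v, mulL]; ring
@[simp] theorem v_mulL (q : Quad) : v (mulL q) = v q := rfl
@[simp] theorem u_mulR (q : Quad) : u (mulR q) = u q := rfl
@[simp] theorem v_mulR (q : Quad) : v (mulR q) = u q + v q := by simp only [u, v, mulR]; ring

theorem isUnimodular_mulL {q : Quad} (hq : IsUnimodular q) : IsUnimodular (mulL q) := by
  obtain ⟨a, b, c, d⟩ := q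
  obtain ⟨ha, hdet⟩ := hq
  exact ⟨by simp only [mulL]; omega, by simp only [mulL]; linear_combination hdet⟩

theorem isUnimodular_mulR {q : Quad} (hq : IsUnimodular q) : IsUnimodular (mulR q) := by
  obtain ⟨a, b, c, d⟩ := q
  obtain ⟨ha, hdet⟩ := hq
  exact ⟨ha, by simp only [mulR]; linear_combination hdet⟩

theorem isUnimodular_ofWord (w : List Bool) : IsUnimodular (ofWord w) := by
  induction w with
  | nil => exact ⟨le_rfl, rfl⟩
  | cons x w ih => cases x with
    | false => exact isUnimodular_mulR ih
    | true => exact isUnimodular_mulL ih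

theorem IsUnimodular.one_le_u {q : Quad} (hq : IsUnimodular q) : 1 ≤ u q :=
  hq.1.trans (Nat.le_add_right _ _)

theorem IsUnimodular.one_le_v {q : Quad} (hq : IsUnimodular q) : 1 ≤ v q := by
  obtain ⟨a, b, c, d⟩ := q
  obtain ⟨_, hdet⟩ := hq
  have : d ≠ 0 := by rintro rfl; simp at hdet
  simp only [v]
  omega

theorem mulL_injective : Function.Injective mulL := by
  rintro ⟨a, b, c, d⟩ ⟨a', b', c', d'⟩ h
  simp only [mulL, Prod.mk.injEq] at h
  simp only [Prod.mk.injEq]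
  omega

theorem mulR_injective : Function.Injective mulR := by
  rintro ⟨a, b, c, d⟩ ⟨a', b', c', d'⟩ h
  simp only [mulR, Prod.mk.injEq] at h
  simp only [Prod.mk.injEq]
  omega

theorem mulL_ne_mulR {p : Quad} (hp : IsUnimodular p) (q : Quad) :
    mulL p ≠ mulR q := by
  obtain ⟨a, b, c, d⟩ := p
  obtain ⟨a', b', c', d'⟩ := q
  have := hp.1
  simp only [mulL, mulR, ne_eq, Prod.mk.injEq]
  omega

theorem mulL_ne_one (q : Quad) : mulL q ≠ (1, 0, 0, 1) := by
  simp only [mulL, ne_eq, Prod.mk.injEq]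
  omega

theorem mulR_ne_one (q : Quad) : mulR q ≠ (1, 0, 0, 1) := by
  simp only [mulR, ne_eq, Prod.mk.injEq]
  omega

theorem ofWord_injective : Function.Injective ofWord := by
  intro w
  induction w with
  | nil =>
    rintro (_ | ⟨_ | _, w'⟩) h
    · rfl
    · exact absurd h.symm (mulR_ne_one _)
    · exact absurd h.symm (mulL_ne_one _)
  | cons x w ih =>
    rintro (_ | ⟨y, w'⟩) h
    · cases x
      · exact absurd h (mulR_ne_one _)
      · exact absurd h (mulL_ne_one _)
    · cases x <;> cases y
      · rw [ih (mulR_injective h)]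
      · exact absurd h.symm (mulL_ne_mulR (isUnimodular_ofWord w') _)
      · exact absurd h (mulL_ne_mulR (isUnimodular_ofWord w) _)
      · rw [ih (mulL_injective h)]

/-- The columns of a unimodular `q ≠ 1` are comparable entrywise, and subtracting the smaller
from the larger is a step of the Euclidean algorithm. -/
theorem IsUnimodular.exists_parent {q : Quad} (hq : IsUnimodular q) (hne : q ≠ (1, 0, 0, 1)) :
    ∃ p, IsUnimodular p ∧ (mulL p = q ∨ mulR p = q) := by
  obtain ⟨a, b, c, d⟩ := q
  obtain ⟨ha, hdet : a * d = b * c + 1⟩ := hq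
  have not_both (hb : b + 1 ≤ a) (hc : c + 1 ≤ d) : False := by
    have : b + c = 0 := by nlinarith [Nat.mul_le_mul hb hc]
    obtain ⟨rfl, rfl⟩ : b = 0 ∧ c = 0 := by omega
    obtain ⟨rfl, rfl⟩ := mul_eq_one.1 hdet
    exact hne rfl
  by_cases hba : b < a
  · have hdc : d ≤ c := by by_contra! hcd; exact not_both hba hcd
    refine ⟨(a - b, b, c - d, d), ⟨by omega, ?_⟩, Or.inl ?_⟩
    · simp only
      zify [hba.le, hdc]
      linear_combination (by exact_mod_cast hdet : (a * d : ℤ) = b * c + 1)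
    · simp only [mulL, Prod.mk.injEq, and_true, true_and]
      omega
  · have hcd : c ≤ d := by by_contra! hdc; nlinarith [Nat.mul_le_mul (not_lt.1 hba) hdc]
    refine ⟨(a, b - a, c, d - c), ⟨ha, ?_⟩, Or.inr ?_⟩
    · simp only
      zify [not_lt.1 hba, hcd]
      linear_combination (by exact_mod_cast hdet : (a * d : ℤ) = b * c + 1)
    · simp only [mulR, Prod.mk.injEq, true_and]
      omega

theorem exists_ofWord_eq {q : Quad} (hq : IsUnimodular q) : ∃ w, ofWord w = q := by
  induction hsize : u q + v q using Nat.strong_induction_on generalizing q with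
  | _ n ih =>
    by_cases hone : q = (1, 0, 0, 1)
    · exact ⟨[], hone.symm⟩
    obtain ⟨p, hp, hpq | hpq⟩ := hq.exists_parent hone
    · have := hp.one_le_v
      obtain ⟨w, rfl⟩ := ih _ (by rw [← hsize, ← hpq, u_mulL, v_mulL]; omega) hp rfl
      exact ⟨true :: w, hpq⟩
    · have := hp.one_le_u
      obtain ⟨w, rfl⟩ := ih _ (by rw [← hsize, ← hpq, u_mulR, v_mulR]; omega) hp rfl
      exact ⟨false :: w, hpq⟩

noncomputable def wordEquiv : List Bool ≃ {q : Quad // IsUnimodular q} :=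
  Equiv.ofBijective (fun w ↦ ⟨ofWord w, isUnimodular_ofWord w⟩)
    ⟨fun _ _ h ↦ ofWord_injective (congrArg Subtype.val h),
      fun q ↦ (exists_ofWord_eq q.2).imp fun _ hw ↦ Subtype.ext hw⟩

noncomputable def weight (q : Quad) : ℝ := 1 / ((u q : ℝ) * v q)

noncomputable def summand (q : Quad) : ℝ :=
  1 / (16 * (u q : ℝ) ^ 2 * (v q : ℝ) ^ 2 * ((u q : ℝ) + v q) ^ 2)

theorem weight_mulL_add_weight_mulR {q : Quad} (hq : IsUnimodular q) :
    weight (mulL q) + weight (mulR q) = weight q := by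
  have hu : (0 : ℝ) < u q := by exact_mod_cast hq.one_le_u
  have hv : (0 : ℝ) < v q := by exact_mod_cast hq.one_le_v
  simp only [weight, u_mulL, v_mulL, u_mulR, v_mulR, Nat.cast_add]
  field_simp

theorem summand_eq_sub {q : Quad} (hq : IsUnimodular q) :
    summand q = (weight q ^ 3 - weight (mulL q) ^ 3 - weight (mulR q) ^ 3) / 48 := by
  have hu : (0 : ℝ) < u q := by exact_mod_cast hq.one_le_u
  have hv : (0 : ℝ) < v q := by exact_mod_cast hq.one_le_v
  simp only [summand, weight, u_mulL, v_mulL, u_mulR, v_mulR, Nat.cast_add]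
  field_simp
  ring

theorem sum_words_weight (n : ℕ) : ∑ w ∈ words n, weight (ofWord w) = 1 := by
  rw [sum_words_eq_of_split (fun w ↦ weight_mulL_add_weight_mulR (isUnimodular_ofWord w))]
  simp [weight, ofWord, u, v]

theorem length_add_two_le (w : List Bool) : w.length + 2 ≤ u (ofWord w) + v (ofWord w) := by
  induction w with
  | nil => simp [ofWord, u, v]
  | cons x w ih =>
    have := (isUnimodular_ofWord w).one_le_u
    have := (isUnimodular_ofWord w).one_le_v
    cases x <;> simp only [ofWord, u_mulL, v_mulL, u_mulR, v_mulR, List.length_cons] <;> omega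

theorem weight_ofWord_le (w : List Bool) : weight (ofWord w) ≤ 1 / (w.length + 1) := by
  have hu := (isUnimodular_ofWord w).one_le_u
  have hv := (isUnimodular_ofWord w).one_le_v
  have h : w.length + 1 ≤ u (ofWord w) * v (ofWord w) := by nlinarith [length_add_two_le w]
  rw [weight]
  gcongr
  exact_mod_cast h

theorem sum_words_weight_pow_three_le (n : ℕ) :
    ∑ w ∈ words n, weight (ofWord w) ^ 3 ≤ 1 / (n + 1) :=
  calc ∑ w ∈ words n, weight (ofWord w) ^ 3
      ≤ ∑ w ∈ words n, 1 / (n + 1) * weight (ofWord w) := sum_le_sum fun w hw ↦ by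
        have h0 : 0 ≤ weight (ofWord w) := by unfold weight; positivity
        have h1 := weight_ofWord_le w
        rw [mem_words.1 hw] at h1
        have h2 : (1 : ℝ) / (n + 1) ≤ 1 := by rw [div_le_one (by positivity)]; linarith
        nlinarith [mul_le_mul h1 h1 h0 (by positivity)]
    _ = 1 / (n + 1) := by rw [← mul_sum, sum_words_weight, mul_one]

theorem hasSum_summand_ofWord : HasSum (fun w ↦ summand (ofWord w)) (1 / 48) := by
  have hG : Tendsto (fun n ↦ ∑ w ∈ words n, weight (ofWord w) ^ 3 / 48) atTop (𝓝 0) := by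
    have h48 : Tendsto (fun n : ℕ ↦ 1 / ((n : ℝ) + 1) / 48) atTop (𝓝 0) := by
      simpa using tendsto_one_div_add_atTop_nhds_zero_nat.div_const (48 : ℝ)
    refine squeeze_zero (fun n ↦ sum_nonneg fun w _ ↦ by unfold weight; positivity)
      (fun n ↦ ?_) h48
    rw [← sum_div]
    gcongr
    exact sum_words_weight_pow_three_le n
  have h := hasSum_of_telescope (f := fun w ↦ summand (ofWord w))
    (G := fun w ↦ weight (ofWord w) ^ 3 / 48) (fun w ↦ by unfold summand; positivity)
    (fun w ↦ by rw [summand_eq_sub (isUnimodular_ofWord w)]; simp only [ofWord]; ring) hG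
  simpa [weight, ofWord, u, v] using h

end SternBrocot

theorem sum_parabola_sq :
    HasSum (fun x : {x : ℕ × ℕ × ℕ × ℕ //
        1 ≤ x.1 ∧ x.1 * x.2.2.2 = x.2.1 * x.2.2.1 + 1} =>
      1 / (16 * ((x.val.1 : ℝ) + x.val.2.2.1) ^ 2 * ((x.val.2.1 : ℝ) + x.val.2.2.2) ^ 2 *
        ((x.val.1 : ℝ) + x.val.2.1 + x.val.2.2.1 + x.val.2.2.2) ^ 2)) (1 / 48) := by
  have h : HasSum (fun q : {q // SternBrocot.IsUnimodular q} ↦ SternBrocot.summand q) (1 / 48) :=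
    SternBrocot.wordEquiv.hasSum_iff.mp SternBrocot.hasSum_summand_ofWord
  refine h.congr_fun fun q ↦ ?_
  simp only [SternBrocot.summand, SternBrocot.u, SternBrocot.v, Nat.cast_add]
  ring
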